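/- For an arbitrary connection form ω, the map ωˢ defined by ωˢ(u)x := ω(u)x − η(Dωv(u), x)·v + η(v,x)·Σᵢ η(bᵢ,u)·Dωv(bᵢ) − η(v,u)·Σᵢ η(Dωbᵢ(v), x)·bᵢ is again a connection form (each ωˢ(u) is η-skew) and is semi-teleparallel with respect to {v, b₁, b₂, b₃}, i.e. dv(u) + ωˢ(u)v = 0 for all u ∈ V and dbᵢ(v) + ωˢ(v)bᵢ = 0 for i = 1,2,3. -/

import Mathlib

open Finset

/- Minkowski space V = ℝ⁴ with bilinear form η. -/
abbrev V4 := Fin 4 → ℝ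

def eta (x y : V4) : ℝ := -(x 0 * y 0) + x 1 * y 1 + x 2 * y 2 + x 3 * y 3

/-- `f : V → V` is linear. -/
def IsLin (f : V4 → V4) : Prop :=
  (∀ x y, f (x + y) = f x + f y) ∧ ∀ (c : ℝ) (x : V4), f (c • x) = c • f x

/-- `f` is η-skew: η(f x, y) = −η(x, f y). -/
def IsSkew (f : V4 → V4) : Prop := ∀ x y, eta (f x) y = - eta x (f y)

/-- A connection form: a linear map `ω : V → End V` with each `ω u` η-skew. -/
def ConnForm (ω : V4 → V4 → V4) : Prop :=
  (∀ u u', ω (u + u') = ω u + ω u') ∧ (∀ (c : ℝ) (u : V4), ω (c • u) = c • ω u) ∧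
  (∀ u, IsLin (ω u)) ∧ (∀ u, IsSkew (ω u))

/-- The semi-teleparallel connection constructed from a Lorentz connection `ω`:
`ωˢ(u)x = ω(u)x − η(Dωv(u),x)·v + η(v,x)·Σᵢ η(bᵢ,u)·Dωv(bᵢ) − η(v,u)·Σᵢ η(Dωbᵢ(v),x)·bᵢ`,
where `Dωv(u) = dv(u) + ω(u)v` and `Dωbᵢ(u) = dbᵢ(u) + ω(u)bᵢ`. -/
def omegaS (v : V4) (dv : V4 → V4) (b : Fin 3 → V4) (db : Fin 3 → V4 → V4)
    (ω : V4 → V4 → V4) (u x : V4) : V4 :=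
  ω u x - eta (dv u + ω u v) x • v
    + eta v x • ∑ i : Fin 3, eta (b i) u • (dv (b i) + ω (b i) v)
    - eta v u • ∑ i : Fin 3, eta (db i v + ω v (b i)) x • b i


/-! Everything reduces to expansions in the η-orthonormal frame: `z = -η(v,z) v + Σ η(bᵢ,z) bᵢ`.
Write `T u = Dωv(u)` and `Sᵢ = Dωbᵢ(v)`. The compatibility conditions and the skewness of `ω`
give `η(v, T u) = 0`, `η(v, Sᵢ) = -η(bᵢ, T v)` and the antisymmetry of `η(bⱼ, Sᵢ)` in `i, j`;
expanding `T u` (by linearity of `T`), `T v` and `Sᵢ` in the frame yields the two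
semi-teleparallel identities. Since `ωˢ(u)` is linear, it is η-skew as soon as
`η(ωˢ(u)x, x) = 0`; after expanding `T u` this quadratic form is
`η(v,u) (η(v,x) η(T v,x) - Σ η(Sᵢ,x) η(bᵢ,x))`, which vanishes because the antisymmetric
part of the `Sᵢ` drops out of `Σ η(Sᵢ,x) η(bᵢ,x)`. -/

lemma eta_comm (x y : V4) : eta x y = eta y x := by
  simp only [eta]; ring

lemma eta_add_left (x y z : V4) : eta (x + y) z = eta x z + eta y z := by
  simp only [eta, Pi.add_apply]; ring

lemma eta_add_right (x y z : V4) : eta x (y + z) = eta x y + eta x z := by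
  simp only [eta, Pi.add_apply]; ring

lemma eta_smul_left (c : ℝ) (x y : V4) : eta (c • x) y = c * eta x y := by
  simp only [eta, Pi.smul_apply, smul_eq_mul]; ring

lemma eta_smul_right (c : ℝ) (x y : V4) : eta x (c • y) = c * eta x y := by
  simp only [eta, Pi.smul_apply, smul_eq_mul]; ring

def etaForm : LinearMap.BilinForm ℝ V4 :=
  LinearMap.mk₂ ℝ eta eta_add_left eta_smul_left eta_add_right eta_smul_right

@[simp]
lemma etaForm_apply (x y : V4) : etaForm x y = eta x y := rfl

lemma eta_sub_left (x y z : V4) : eta (x - y) z = eta x z - eta y z := by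
  simp only [← etaForm_apply, map_sub, LinearMap.sub_apply]

lemma eta_sub_right (x y z : V4) : eta x (y - z) = eta x y - eta x z := by
  simp only [← etaForm_apply, map_sub]

lemma eta_sum_left {ι : Type*} (s : Finset ι) (f : ι → V4) (y : V4) :
    eta (∑ i ∈ s, f i) y = ∑ i ∈ s, eta (f i) y := by
  simp only [← etaForm_apply, map_sum, LinearMap.sum_apply]

lemma IsSkew.eta_apply_self {f : V4 → V4} (hf : IsSkew f) (x : V4) : eta x (f x) = 0 := by
  have h := hf x x
  rw [eta_comm] at h
  linarith

lemma IsSkew.of_eta_apply_self {f : V4 → V4} (hf : IsLin f) (h : ∀ x, eta (f x) x = 0) :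
    IsSkew f := by
  intro x y
  have hxy := h (x + y)
  rw [hf.1, eta_add_left, eta_add_right, eta_add_right, h x, h y, eta_comm (f y) x] at hxy
  linarith

lemma sum_sum_mul_mul_eq_zero_of_antisymm {ι R : Type*} [Fintype ι] [Field R] [CharZero R]
    (A : ι → ι → R) (hA : ∀ i j, A i j = -A j i) (c : ι → R) :
    ∑ i, ∑ j, A i j * c i * c j = 0 := by
  have hneg : ∑ i, ∑ j, A i j * c i * c j = -∑ i, ∑ j, A i j * c i * c j := by
    conv_lhs => rw [Finset.sum_comm]
    rw [← Finset.sum_neg_distrib]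
    refine Finset.sum_congr rfl fun j _ => ?_
    rw [← Finset.sum_neg_distrib]
    refine Finset.sum_congr rfl fun i _ => ?_
    rw [hA]
    ring
  linear_combination hneg / 2

structure IsOrthonormalFrame (v : V4) (b : Fin 3 → V4) : Prop where
  eta_self : eta v v = -1
  eta_frame : ∀ i j, eta (b i) (b j) = if i = j then 1 else 0
  eta_frame_right : ∀ i, eta v (b i) = 0

namespace IsOrthonormalFrame

variable {v : V4} {b : Fin 3 → V4}

lemma linearIndependent (hF : IsOrthonormalFrame v b) :
    LinearIndependent ℝ (Fin.cons v b : Fin 4 → V4) := by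
  obtain ⟨hv, hb, hvb⟩ := hF
  refine LinearMap.BilinForm.linearIndependent_of_iIsOrtho (B := etaForm)
    (LinearMap.BilinForm.iIsOrtho_def.2 fun i j hij => ?_) fun i => ?_
  · cases i using Fin.cases <;> cases j using Fin.cases
    · exact absurd rfl hij
    · simp [hvb]
    · simp [eta_comm _ v, hvb]
    · simp_all [Fin.succ_inj]
  · cases i using Fin.cases <;> simp [hv, hb]

lemma eq_frame_expansion (hF : IsOrthonormalFrame v b) (z : V4) :
    z = -(eta v z) • v + ∑ i, eta (b i) z • b i := by
  let β := basisOfLinearIndependentOfCardEqFinrank hF.linearIndependent (by simp)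
  let P : V4 →ₗ[ℝ] V4 :=
    -(etaForm v).smulRight v + ∑ i, (etaForm (b i)).smulRight (b i)
  have hP : P = LinearMap.id := β.ext fun k => by
    cases k using Fin.cases <;>
      simp [P, β, hF.eta_self, hF.eta_frame, hF.eta_frame_right, eta_comm _ v]
  simpa [P] using (LinearMap.congr_fun hP z).symm

lemma eta_eq_frame_sum (hF : IsOrthonormalFrame v b) (w x : V4) :
    eta w x = -(eta v w * eta v x) + ∑ i, eta (b i) w * eta (b i) x := by
  conv_lhs => rw [hF.eq_frame_expansion w]
  simp only [eta_add_left, eta_smul_left, eta_sum_left]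
  ring

lemma map_eq_frame_expansion (hF : IsOrthonormalFrame v b) {f : V4 → V4} (hf : IsLin f)
    (u : V4) : f u = -(eta v u) • f v + ∑ i, eta (b i) u • f (b i) := by
  let F : V4 →ₗ[ℝ] V4 := IsLinearMap.mk' f ⟨hf.1, hf.2⟩
  change F u = -(eta v u) • F v + ∑ i, eta (b i) u • F (b i)
  conv_lhs => rw [hF.eq_frame_expansion u]
  simp only [map_add, map_sum, map_smul]

end IsOrthonormalFrame

section SemiTeleparallel

variable {v : V4} {dv : V4 → V4} {b : Fin 3 → V4} {db : Fin 3 → V4 → V4}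
  {ω : V4 → V4 → V4}

lemma isLin_covDeriv (hdv : IsLin dv) (hω : ConnForm ω) : IsLin fun u => dv u + ω u v := by
  refine ⟨fun x y => ?_, fun c x => ?_⟩
  · simp only [hdv.1, hω.1, Pi.add_apply]; abel
  · simp only [hdv.2, hω.2.1, Pi.smul_apply, smul_add]

lemma eta_covDeriv_eq_zero (hdvorth : ∀ u, eta v (dv u) = 0) (hω : ConnForm ω) (u : V4) :
    eta v (dv u + ω u v) = 0 := by
  rw [eta_add_right, hdvorth, (hω.2.2.2 u).eta_apply_self, add_zero]

lemma eta_frameDeriv (hcompat1 : ∀ i u, eta v (db i u) + eta (b i) (dv u) = 0)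
    (hω : ConnForm ω) (i : Fin 3) (u : V4) :
    eta v (db i u + ω u (b i)) = -eta (b i) (dv u + ω u v) := by
  have hskew := hω.2.2.2 u v (b i)
  rw [eta_comm (ω u v)] at hskew
  rw [eta_add_right, eta_add_right]
  linarith [hcompat1 i u]

lemma eta_frameDeriv_antisymm (hcompat2 : ∀ i j u, eta (b i) (db j u) + eta (b j) (db i u) = 0)
    (hω : ConnForm ω) (i j : Fin 3) (u : V4) :
    eta (b i) (db j u + ω u (b j)) = -eta (b j) (db i u + ω u (b i)) := by
  have hskew := hω.2.2.2 u (b i) (b j)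
  rw [eta_comm (ω u (b i))] at hskew
  rw [eta_add_right, eta_add_right]
  linarith [hcompat2 i j u]

lemma sum_eta_frameDeriv_mul (hF : IsOrthonormalFrame v b)
    (hdvorth : ∀ u, eta v (dv u) = 0)
    (hcompat1 : ∀ i u, eta v (db i u) + eta (b i) (dv u) = 0)
    (hcompat2 : ∀ i j u, eta (b i) (db j u) + eta (b j) (db i u) = 0)
    (hω : ConnForm ω) (u x : V4) :
    ∑ i, eta (db i u + ω u (b i)) x * eta (b i) x = eta v x * eta (dv u + ω u v) x := by
  set S := fun i => db i u + ω u (b i)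
  set T := dv u + ω u v
  have hexp := hF.eta_eq_frame_sum
  calc ∑ i, eta (S i) x * eta (b i) x
      = ∑ i, (eta (b i) T * eta v x + ∑ j, eta (b j) (S i) * eta (b j) x) * eta (b i) x := by
        refine Finset.sum_congr rfl fun i _ => ?_
        rw [hexp, eta_frameDeriv hcompat1 hω]
        ring
    _ = eta v x * ∑ i, eta (b i) T * eta (b i) x
          + ∑ i, ∑ j, eta (b j) (S i) * eta (b i) x * eta (b j) x := by
        simp only [add_mul, Finset.sum_add_distrib, Finset.mul_sum, Finset.sum_mul]
        congr 1 <;> refine Finset.sum_congr rfl fun i _ => ?_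
        · ring
        · exact Finset.sum_congr rfl fun j _ => by ring
    _ = eta v x * eta T x := by
        rw [sum_sum_mul_mul_eq_zero_of_antisymm _
          (fun i j => eta_frameDeriv_antisymm hcompat2 hω j i u), hexp T,
          eta_covDeriv_eq_zero hdvorth hω]
        ring

lemma omegaS_add (hdv : IsLin dv) (hω : ConnForm ω) (u u' : V4) :
    omegaS v dv b db ω (u + u') = omegaS v dv b db ω u + omegaS v dv b db ω u' := by
  funext x
  simp only [omegaS, Pi.add_apply, hω.1, hdv.1, eta_add_left, eta_add_right, Fin.sum_univ_three]
  module

lemma omegaS_smul (hdv : IsLin dv) (hω : ConnForm ω) (c : ℝ) (u : V4) :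
    omegaS v dv b db ω (c • u) = c • omegaS v dv b db ω u := by
  funext x
  simp only [omegaS, Pi.smul_apply, hω.2.1, hdv.2, eta_add_left, eta_smul_left, eta_smul_right,
    Fin.sum_univ_three]
  module

lemma isLin_omegaS (hω : ConnForm ω) (u : V4) : IsLin (omegaS v dv b db ω u) := by
  refine ⟨fun x y => ?_, fun c x => ?_⟩
  · simp only [omegaS, (hω.2.2.1 u).1, eta_add_right, eta_add_left, Fin.sum_univ_three]
    module
  · simp only [omegaS, (hω.2.2.1 u).2, eta_smul_right, Fin.sum_univ_three]
    module

lemma isSkew_omegaS (hF : IsOrthonormalFrame v b)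
    (hdv : IsLin dv) (hdvorth : ∀ u, eta v (dv u) = 0)
    (hcompat1 : ∀ i u, eta v (db i u) + eta (b i) (dv u) = 0)
    (hcompat2 : ∀ i j u, eta (b i) (db j u) + eta (b j) (db i u) = 0)
    (hω : ConnForm ω) (u : V4) : IsSkew (omegaS v dv b db ω u) := by
  refine IsSkew.of_eta_apply_self (isLin_omegaS hω u) fun x => ?_
  have hT := congrArg (eta · x) (hF.map_eq_frame_expansion (isLin_covDeriv (v := v) hdv hω) u)
  have hS := sum_eta_frameDeriv_mul hF hdvorth hcompat1 hcompat2 hω v x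
  have hω0 := (hω.2.2.2 u).eta_apply_self x
  rw [eta_comm] at hω0
  simp only [omegaS, eta_sub_left, eta_add_left, eta_smul_left, eta_sum_left] at hT hS ⊢
  linear_combination hω0 - eta v x * hT - eta v u * hS

lemma dv_add_omegaS_eq_zero (hF : IsOrthonormalFrame v b)
    (hdv : IsLin dv) (hdvorth : ∀ u, eta v (dv u) = 0)
    (hcompat1 : ∀ i u, eta v (db i u) + eta (b i) (dv u) = 0) (hω : ConnForm ω) (u : V4) :
    dv u + omegaS v dv b db ω u v = 0 := by
  have hT := hF.map_eq_frame_expansion (isLin_covDeriv (v := v) hdv hω) u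
  have hTv := hF.eq_frame_expansion (dv v + ω v v)
  rw [eta_covDeriv_eq_zero hdvorth hω] at hTv
  have hTu_v : eta (dv u + ω u v) v = 0 := by
    rw [eta_comm]; exact eta_covDeriv_eq_zero hdvorth hω u
  have hS_v (i : Fin 3) : eta (db i v + ω v (b i)) v = -eta (b i) (dv v + ω v v) := by
    rw [eta_comm]; exact eta_frameDeriv hcompat1 hω i v
  simp only [omegaS, hTu_v, hF.eta_self, hS_v, neg_smul, Finset.sum_neg_distrib]
  linear_combination (norm := module) hT - eta v u • hTv

lemma db_add_omegaS_frame_eq_zero (hF : IsOrthonormalFrame v b)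
    (hcompat1 : ∀ i u, eta v (db i u) + eta (b i) (dv u) = 0)
    (hcompat2 : ∀ i j u, eta (b i) (db j u) + eta (b j) (db i u) = 0)
    (hω : ConnForm ω) (i : Fin 3) :
    db i v + omegaS v dv b db ω v (b i) = 0 := by
  have hS := hF.eq_frame_expansion (db i v + ω v (b i))
  rw [eta_frameDeriv hcompat1 hω] at hS
  have hSj_bi (j : Fin 3) :
      eta (db j v + ω v (b j)) (b i) = -eta (b j) (db i v + ω v (b i)) := by
    rw [eta_comm]; exact eta_frameDeriv_antisymm hcompat2 hω i j v
  simp only [omegaS, hF.eta_frame_right, hF.eta_self, hSj_bi, eta_comm (dv v + ω v v), neg_smul,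
    Finset.sum_neg_distrib]
  linear_combination (norm := module) hS

end SemiTeleparallel

theorem statement4_general (v : V4) (hv : eta v v = -1)
    (dv : V4 → V4) (hdvlin : IsLin dv) (hdvorth : ∀ u, eta v (dv u) = 0)
    (b : Fin 3 → V4) (hb : ∀ i j, eta (b i) (b j) = if i = j then 1 else 0)
    (hvb : ∀ i, eta v (b i) = 0)
    (db : Fin 3 → V4 → V4)
    (hcompat1 : ∀ i u, eta v (db i u) + eta (b i) (dv u) = 0)
    (hcompat2 : ∀ i j u, eta (b i) (db j u) + eta (b j) (db i u) = 0)
    (ω : V4 → V4 → V4) (hω : ConnForm ω) :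
    ConnForm (omegaS v dv b db ω) ∧
    (∀ u, dv u + omegaS v dv b db ω u v = 0) ∧
    (∀ i, db i v + omegaS v dv b db ω v (b i) = 0) := by
  have hF : IsOrthonormalFrame v b := ⟨hv, hb, hvb⟩
  exact ⟨⟨omegaS_add hdvlin hω, omegaS_smul hdvlin hω, isLin_omegaS hω,
      isSkew_omegaS hF hdvlin hdvorth hcompat1 hcompat2 hω⟩,
    dv_add_omegaS_eq_zero hF hdvlin hdvorth hcompat1 hω,
    db_add_omegaS_frame_eq_zero hF hcompat1 hcompat2 hω⟩

/-- For an arbitrary connection form `ω`, the map `ωˢ` is again a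
connection form (in particular each `ωˢ(u)` is η-skew) and is semi-teleparallel with
respect to `{v, b₁, b₂, b₃}`: `dv(u) + ωˢ(u)v = 0` for all `u` and
`dbᵢ(v) + ωˢ(v)bᵢ = 0` for `i = 1,2,3`. -/
theorem statement4 (v : V4) (hv : eta v v = -1)
    (dv : V4 → V4) (hdvlin : IsLin dv) (hdvorth : ∀ u, eta v (dv u) = 0)
    (b : Fin 3 → V4) (hb : ∀ i j, eta (b i) (b j) = if i = j then 1 else 0)
    (hvb : ∀ i, eta v (b i) = 0)
    (db : Fin 3 → V4 → V4) (hdblin : ∀ i, IsLin (db i))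
    (hcompat1 : ∀ i u, eta v (db i u) + eta (b i) (dv u) = 0)
    (hcompat2 : ∀ i j u, eta (b i) (db j u) + eta (b j) (db i u) = 0)
    (ω : V4 → V4 → V4) (hω : ConnForm ω) :
    ConnForm (omegaS v dv b db ω) ∧
    (∀ u, dv u + omegaS v dv b db ω u v = 0) ∧
    (∀ i, db i v + omegaS v dv b db ω v (b i) = 0) :=
  statement4_general v hv dv hdvlin hdvorth b hb hvb db hcompat1 hcompat2 ω hω
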